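/- arXiv:2009.14377 — 3 statements merged into one kernel-verified Lean document; each statement's English description precedes it below -/
import Mathlib

section
/- Let k and n be positive integers with k > 2, and let A be a generalized Cartan matrix of type N_{k,n} (i.e., of type N_k with dimension n). Then A has a principal submatrix of type N_{k-1} whose dimension is n-1. -/
/-- An `n × n` integer matrix is a generalized Cartan matrix (GCM). -/
def IsGCM {n : ℕ} (A : Matrix (Fin n) (Fin n) ℤ) : Prop :=
  (∀ i, A i i = 2) ∧ (∀ i j, i ≠ j → A i j ≤ 0) ∧ (∀ i j, A i j = 0 → A j i = 0)

/-- The graph on the index set of `A`, with an edge between `i ≠ j` whenever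
`A i j ≠ 0` (stated symmetrically so as to be well-defined for all matrices;
for a GCM, `A i j ≠ 0 ↔ A j i ≠ 0`). -/
def gcmGraph {n : ℕ} (A : Matrix (Fin n) (Fin n) ℤ) : SimpleGraph (Fin n) where
  Adj i j := i ≠ j ∧ (A i j ≠ 0 ∨ A j i ≠ 0)
  symm := ⟨fun i j h => ⟨h.1.symm, h.2.symm⟩⟩
  loopless := ⟨fun i h => h.1 rfl⟩

/-- A matrix is indecomposable (its diagram is connected). -/
def IsIndecomposable {n : ℕ} (A : Matrix (Fin n) (Fin n) ℤ) : Prop :=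
  (gcmGraph A).Connected

/-- An indecomposable GCM is of finite type: there is `u > 0` with `A ⬝ u > 0`. -/
def IsFinType {n : ℕ} (A : Matrix (Fin n) (Fin n) ℤ) : Prop :=
  IsGCM A ∧ IsIndecomposable A ∧
    ∃ u : Fin n → ℚ, (∀ i, 0 < u i) ∧ (∀ i, 0 < ∑ j, (A i j : ℚ) * u j)

/-- An indecomposable GCM is of affine type: there is `u > 0` with `A ⬝ u = 0`. -/
def IsAffType {n : ℕ} (A : Matrix (Fin n) (Fin n) ℤ) : Prop :=
  IsGCM A ∧ IsIndecomposable A ∧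
    ∃ u : Fin n → ℚ, (∀ i, 0 < u i) ∧ (∀ i, ∑ j, (A i j : ℚ) * u j = 0)

/-- An indecomposable GCM is of indefinite type: there is `u > 0` with `A ⬝ u < 0`. -/
def IsIndefType {n : ℕ} (A : Matrix (Fin n) (Fin n) ℤ) : Prop :=
  IsGCM A ∧ IsIndecomposable A ∧
    ∃ u : Fin n → ℚ, (∀ i, 0 < u i) ∧ (∀ i, ∑ j, (A i j : ℚ) * u j < 0)

/-- `B` is a principal submatrix of `A`: the restriction of `A` to a subset of
its index set (encoded by a strictly monotone map `Fin m → Fin n`). -/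
def IsPrincipalSubmatrix {m n : ℕ} (B : Matrix (Fin m) (Fin m) ℤ)
    (A : Matrix (Fin n) (Fin n) ℤ) : Prop :=
  ∃ f : Fin m → Fin n, StrictMono f ∧ B = A.submatrix f f

/-- A proper principal submatrix: the corresponding subset is nonempty and proper. -/
def IsProperPrincipalSubmatrix {m n : ℕ} (B : Matrix (Fin m) (Fin m) ℤ)
    (A : Matrix (Fin n) (Fin n) ℤ) : Prop :=
  IsPrincipalSubmatrix B A ∧ 0 < m ∧ m < n

/-- A GCM is of hyperbolic type: indecomposable, neither finite nor affine,
and every proper connected principal submatrix is of finite or affine type. -/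
def IsHypType {n : ℕ} (A : Matrix (Fin n) (Fin n) ℤ) : Prop :=
  IsGCM A ∧ IsIndecomposable A ∧ ¬ IsFinType A ∧ ¬ IsAffType A ∧
    ∀ m, ∀ B : Matrix (Fin m) (Fin m) ℤ,
      IsProperPrincipalSubmatrix B A → IsIndecomposable B →
        (IsFinType B ∨ IsAffType B)

/-- `N₀` = finite type, `N₁` = affine type, `N₂` = hyperbolic type; for `k ≥ 3`,
a GCM is of type `N_k` if it has a proper principal submatrix of type `N_{k-1}`
and every proper connected principal submatrix is of type `N_m` for some `m < k`. -/
def IsNType : (k : ℕ) → {n : ℕ} → Matrix (Fin n) (Fin n) ℤ → Prop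
  | 0, _, A => IsFinType A
  | 1, _, A => IsAffType A
  | 2, _, A => IsHypType A
  | (k+3), _, A => IsGCM A ∧ IsIndecomposable A ∧
      (∃ m, ∃ B : Matrix (Fin m) (Fin m) ℤ,
        IsProperPrincipalSubmatrix B A ∧ IsNType (k+2) B) ∧
      (∀ m, ∀ B : Matrix (Fin m) (Fin m) ℤ,
        IsProperPrincipalSubmatrix B A → IsIndecomposable B →
          ∃ m', ∃ _ : m' < k + 3, IsNType m' B)
  termination_by k => k

/-!
Inside a GCM of type `N_k`, `k ≥ 3`, sits a proper principal submatrix `B` of type `N_{k-1}`.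
If `B` had fewer than `n - 1` rows, adjoining to it one index of `A` adjacent to it would give a
proper connected principal submatrix `C` of `A`, hence of type `N_j` with `j < k`, containing `B`
properly. But the type strictly decreases when passing to a proper principal submatrix of type at
least `N_2`: a connected proper principal submatrix of a matrix of finite or affine type is of
finite type, and a matrix of type `N_j` with `j ≥ 1` is not of finite type. So `k - 1 < j < k`.
-/

open Finset

variable {m n : ℕ}

section Graph

variable {V : Type*} {G : SimpleGraph V}

lemma SimpleGraph.Connected.exists_adj_mem_notMem (hG : G.Connected) {s : Set V}
    (hs : s.Nonempty) (hs' : s ≠ Set.univ) : ∃ a ∈ s, ∃ b ∉ s, G.Adj a b := by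
  obtain ⟨x, hx⟩ := hs
  obtain ⟨y, hy⟩ := (Set.ne_univ_iff_exists_notMem s).1 hs'
  obtain ⟨d, -, hd, hd'⟩ := (hG.preconnected x y).some.exists_boundary_dart s hx hy
  exact ⟨d.fst, hd, d.snd, hd', d.adj⟩

lemma SimpleGraph.Connected.exists_connected_induce_insert (hG : G.Connected) {s : Set V}
    (hs : (G.induce s).Connected) (hs' : s ≠ Set.univ) :
    ∃ b ∉ s, (G.induce (insert b s)).Connected := by
  obtain ⟨⟨x, hx⟩⟩ := hs.nonempty
  obtain ⟨a, ha, b, hb, hab⟩ := hG.exists_adj_mem_notMem ⟨x, hx⟩ hs'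
  refine ⟨b, hb, ?_⟩
  rw [← Set.union_singleton]
  exact SimpleGraph.connected_induce_union hs.preconnected .of_subsingleton ha rfl hab

end Graph

lemma Fin.range_ne_univ_of_lt (hmn : m < n) (f : Fin m → Fin n) : Set.range f ≠ Set.univ :=
  fun h => hmn.not_ge <| by
    simpa using Fintype.card_le_of_surjective f (Set.range_eq_univ.1 h)

section Submatrix

variable {A : Matrix (Fin n) (Fin n) ℤ} {f : Fin m → Fin n}

lemma IsGCM.submatrix (hA : IsGCM A) (hf : Function.Injective f) : IsGCM (A.submatrix f f) :=
  ⟨fun i => hA.1 (f i), fun i j hij => hA.2.1 (f i) (f j) (hf.ne hij),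
    fun i j h => hA.2.2 (f i) (f j) h⟩

lemma IsGCM.neg_of_adj (hA : IsGCM A) {i j : Fin n} (h : (gcmGraph A).Adj i j) : A i j < 0 :=
  (hA.2.1 i j h.1).lt_of_ne fun h0 => h.2.elim (· h0) (· (hA.2.2 i j h0))

def gcmGraphSubmatrixEmbedding (A : Matrix (Fin n) (Fin n) ℤ) (hf : Function.Injective f) :
    gcmGraph (A.submatrix f f) ↪g gcmGraph A where
  toFun := f
  inj' := hf
  map_rel_iff' := by simp [gcmGraph, hf.ne_iff]

lemma isIndecomposable_submatrix_iff (A : Matrix (Fin n) (Fin n) ℤ) (hf : Function.Injective f) :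
    IsIndecomposable (A.submatrix f f) ↔ ((gcmGraph A).induce (Set.range f)).Connected :=
  (gcmGraphSubmatrixEmbedding A hf).isoInduceRange.connected_iff

lemma isPrincipalSubmatrix_of_range_subset (A : Matrix (Fin n) (Fin n) ℤ) {l : ℕ}
    {g : Fin l → Fin n} (hf : StrictMono f) (hg : StrictMono g) (hfg : Set.range f ⊆ Set.range g) :
    IsPrincipalSubmatrix (A.submatrix f f) (A.submatrix g g) := by
  choose h hh using fun i => hfg ⟨i, rfl⟩
  refine ⟨h, fun i j hij => hg.lt_iff_lt.1 ?_, ?_⟩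
  · simpa only [hh] using hf hij
  · ext i j
    simp [hh]

lemma IsIndecomposable.exists_extension (hA : IsIndecomposable A) (hf : StrictMono f)
    (hmn : m < n) (hc : IsIndecomposable (A.submatrix f f)) :
    ∃ g : Fin (m + 1) → Fin n, StrictMono g ∧
      IsPrincipalSubmatrix (A.submatrix f f) (A.submatrix g g) ∧
      IsIndecomposable (A.submatrix g g) := by
  obtain ⟨b, hb, hconn⟩ := hA.exists_connected_induce_insert
    ((isIndecomposable_submatrix_iff A hf.injective).1 hc) (Fin.range_ne_univ_of_lt hmn f)
  have hcard : (insert b (univ.image f)).card = m + 1 := by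
    rw [card_insert_of_notMem (by simpa using hb), card_image_of_injective _ hf.injective,
      card_fin]
  set g := (insert b (univ.image f)).orderEmbOfFin hcard
  have hg : Set.range g = insert b (Set.range f) := by simp [g]
  refine ⟨g, g.strictMono,
    isPrincipalSubmatrix_of_range_subset A hf g.strictMono (hg ▸ Set.subset_insert _ _), ?_⟩
  rwa [isIndecomposable_submatrix_iff A g.injective, hg]

end Submatrix

section FiniteType

variable {B : Matrix (Fin m) (Fin m) ℤ}

lemma sum_submatrix_add_sum_compl (A : Matrix (Fin n) (Fin n) ℤ) {f : Fin m → Fin n}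
    (hf : Function.Injective f) (u : Fin n → ℚ) (i : Fin m) :
    ∑ j, (A.submatrix f f i j : ℚ) * u (f j) + ∑ y ∈ (univ.image f)ᶜ, (A (f i) y : ℚ) * u y =
      ∑ y, (A (f i) y : ℚ) * u y := by
  rw [← sum_add_sum_compl (univ.image f), sum_image fun _ _ _ _ h => hf h]
  rfl

lemma IsGCM.sum_nonpos_of_notMem {A : Matrix (Fin n) (Fin n) ℤ} (hA : IsGCM A)
    {u : Fin n → ℚ} (hu : ∀ y, 0 ≤ u y) {s : Finset (Fin n)} {i : Fin n} (hi : i ∉ s) :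
    ∑ y ∈ s, (A i y : ℚ) * u y ≤ 0 :=
  sum_nonpos fun y hy => mul_nonpos_of_nonpos_of_nonneg
    (by exact_mod_cast hA.2.1 i y (by rintro rfl; exact hi hy)) (hu y)

lemma IsFinType.of_isPrincipalSubmatrix {A : Matrix (Fin n) (Fin n) ℤ} (hA : IsFinType A)
    (hBA : IsPrincipalSubmatrix B A) (hB : IsIndecomposable B) : IsFinType B := by
  obtain ⟨f, hf, rfl⟩ := hBA
  obtain ⟨hG, -, u, hu, hAu⟩ := hA
  refine ⟨hG.submatrix hf.injective, hB, fun j => u (f j), fun i => hu (f i), fun i => ?_⟩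
  have hout : ∑ y ∈ (univ.image f)ᶜ, (A (f i) y : ℚ) * u y ≤ 0 :=
    hG.sum_nonpos_of_notMem (fun y => (hu y).le) (by simp)
  linarith [sum_submatrix_add_sum_compl A hf.injective u i, hAu (f i)]

lemma IsFinType.exists_pos_sum_of_pos (hB : IsFinType B) {v : Fin m → ℚ} (hv : ∀ i, 0 < v i) :
    ∃ i, 0 < ∑ j, (B i j : ℚ) * v j := by
  obtain ⟨hG, hc, u, hu, hBu⟩ := hB
  have := hc.nonempty
  obtain ⟨i, -, hi⟩ := exists_max_image univ (fun j => v j / u j) univ_nonempty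
  set c := v i / u i
  -- `c • u - v` is nonnegative and vanishes at `i`, so `B` maps it to something nonpositive at `i`
  have hci : c * u i = v i := div_mul_cancel₀ _ (hu i).ne'
  have hcu : ∀ j, (B i j : ℚ) * (c * u j) ≤ (B i j : ℚ) * v j := fun j => by
    rcases eq_or_ne j i with rfl | hj
    · rw [hci]
    · exact mul_le_mul_of_nonpos_left ((div_le_iff₀ (hu j)).1 (hi j (mem_univ j)))
        (by exact_mod_cast hG.2.1 i j hj.symm)
  refine ⟨i, ?_⟩
  calc 0 < c * ∑ j, (B i j : ℚ) * u j := mul_pos (div_pos (hv i) (hu i)) (hBu i)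
    _ = ∑ j, (B i j : ℚ) * (c * u j) := by simp only [mul_sum, mul_left_comm]
    _ ≤ ∑ j, (B i j : ℚ) * v j := sum_le_sum fun j _ => hcu j

lemma IsFinType.not_isAffType (hB : IsFinType B) : ¬IsAffType B := fun ⟨_, _, v, hv, hBv⟩ => by
  obtain ⟨i, hi⟩ := hB.exists_pos_sum_of_pos hv
  exact hi.ne' (hBv i)

lemma IsGCM.exists_pos_with_fewer_zeros (hB : IsGCM B) {v : Fin m → ℚ} (hv : ∀ i, 0 < v i)
    (hBv : ∀ i, 0 ≤ ∑ j, (B i j : ℚ) * v j) {a b : Fin m} (hab : (gcmGraph B).Adj a b)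
    (ha : ∑ j, (B a j : ℚ) * v j = 0) (hb : 0 < ∑ j, (B b j : ℚ) * v j) :
    ∃ u : Fin m → ℚ, (∀ i, 0 < u i) ∧ (∀ i, 0 ≤ ∑ j, (B i j : ℚ) * u j) ∧
      ({i | ∑ j, (B i j : ℚ) * u j = 0} : Finset (Fin m)) ⊂
        ({i | ∑ j, (B i j : ℚ) * v j = 0} : Finset (Fin m)) := by
  obtain ⟨ε, hε, hεv, hεb⟩ : ∃ ε : ℚ, 0 < ε ∧ 4 * ε ≤ v b ∧ 4 * ε ≤ ∑ j, (B b j : ℚ) * v j :=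
    ⟨min (v b) (∑ j, (B b j : ℚ) * v j) / 4, div_pos (lt_min (hv b) hb) four_pos,
      by linarith [min_le_left (v b) (∑ j, (B b j : ℚ) * v j)],
      by linarith [min_le_right (v b) (∑ j, (B b j : ℚ) * v j)]⟩
  -- lowering `v` at the positive row `b` makes the zero row `a` positive
  set u : Fin m → ℚ := v - Pi.single b ε
  have hBu : ∀ i, ∑ j, (B i j : ℚ) * u j = ∑ j, (B i j : ℚ) * v j - B i b * ε :=
    fun i => by simp [u, mul_sub, sum_sub_distrib, Pi.single_apply]
  have hBib : ∀ i ≠ b, (B i b : ℚ) * ε ≤ 0 := fun i hi =>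
    mul_nonpos_of_nonpos_of_nonneg (by exact_mod_cast hB.2.1 i b hi) hε.le
  have hBbb : (B b b : ℚ) = 2 := by exact_mod_cast hB.1 b
  have hBub : 0 < ∑ j, (B b j : ℚ) * u j := by rw [hBu, hBbb]; linarith
  refine ⟨u, fun i => ?_, fun i => ?_, ?_⟩
  · rcases eq_or_ne i b with rfl | hi
    · simp only [u, Pi.sub_apply, Pi.single_eq_same]; linarith
    · simpa [u, Pi.single_apply, hi] using hv i
  · rcases eq_or_ne i b with rfl | hi
    · exact hBub.le
    · rw [hBu]; linarith [hBv i, hBib i hi]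
  · refine (ssubset_iff_of_subset fun i => ?_).2 ⟨a, by simpa using ha, ?_⟩
    · simp only [mem_filter, mem_univ, true_and]
      intro hi
      have hib : i ≠ b := by rintro rfl; exact hBub.ne' hi
      rw [hBu] at hi
      linarith [hBv i, hBib i hib]
    · have hBab : (B a b : ℚ) < 0 := by exact_mod_cast hB.neg_of_adj hab
      simp only [mem_filter, mem_univ, true_and, hBu, ha]
      nlinarith

theorem IsGCM.isFinType_of_nonneg (hB : IsGCM B) (hc : IsIndecomposable B) {v : Fin m → ℚ}
    (hv : ∀ i, 0 < v i) (hBv : ∀ i, 0 ≤ ∑ j, (B i j : ℚ) * v j)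
    (hpos : ∃ i, 0 < ∑ j, (B i j : ℚ) * v j) : IsFinType B := by
  obtain ⟨Z, hZ⟩ : ∃ Z, ({i | ∑ j, (B i j : ℚ) * v j = 0} : Finset (Fin m)) = Z := ⟨_, rfl⟩
  induction Z using Finset.strongInduction generalizing v with
  | H Z ih =>
  obtain ⟨p, hp⟩ := hpos
  rcases Z.eq_empty_or_nonempty with rfl | ⟨z, hz⟩
  · refine ⟨hB, hc, v, hv, fun i => (hBv i).lt_of_ne' fun hi => ?_⟩
    exact filter_eq_empty_iff.1 hZ (mem_univ i) hi
  · obtain ⟨a, ha, b, hb, hab⟩ := hc.exists_adj_mem_notMem (s := {i | ∑ j, (B i j : ℚ) * v j = 0})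
      ⟨z, by simpa using hZ.symm.subset hz⟩ ((Set.ne_univ_iff_exists_notMem _).2 ⟨p, hp.ne'⟩)
    obtain ⟨u, hu, hBu, hZu⟩ :=
      hB.exists_pos_with_fewer_zeros hv hBv hab ha ((hBv b).lt_of_ne' hb)
    refine ih _ (hZ ▸ hZu) hu hBu ⟨p, (hBu p).lt_of_ne' fun hup => ?_⟩ rfl
    simpa [hp.ne'] using hZu.subset (mem_filter.2 ⟨mem_univ p, hup⟩)

lemma IsAffType.isFinType_of_isProperPrincipalSubmatrix {A : Matrix (Fin n) (Fin n) ℤ}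
    (hA : IsAffType A) (hBA : IsProperPrincipalSubmatrix B A) (hB : IsIndecomposable B) :
    IsFinType B := by
  obtain ⟨⟨f, hf, rfl⟩, -, hmn⟩ := hBA
  obtain ⟨hG, hAc, u, hu, hAu⟩ := hA
  have hrow : ∀ i, ∑ j, (A.submatrix f f i j : ℚ) * u (f j) =
      -∑ y ∈ (univ.image f)ᶜ, (A (f i) y : ℚ) * u y := fun i => by
    linarith [sum_submatrix_add_sum_compl A hf.injective u i, hAu (f i)]
  have hout : ∀ i, f i ∉ (univ.image f)ᶜ := by simp
  have := hB.nonempty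
  obtain ⟨_, ⟨a, rfl⟩, b, hb, hab⟩ :=
    hAc.exists_adj_mem_notMem (Set.range_nonempty f) (Fin.range_ne_univ_of_lt hmn f)
  refine (hG.submatrix hf.injective).isFinType_of_nonneg hB (v := fun j => u (f j)) (fun i => hu _)
    (fun i => ?_) ⟨a, ?_⟩
  · rw [hrow, neg_nonneg]
    exact hG.sum_nonpos_of_notMem (fun y => (hu y).le) (hout i)
  · have hb' : b ∈ (univ.image f)ᶜ := by simpa using hb
    have hAab : (A (f a) b : ℚ) * u b < 0 :=
      mul_neg_of_neg_of_pos (by exact_mod_cast hG.neg_of_adj hab) (hu b)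
    have hrest := hG.sum_nonpos_of_notMem (fun y => (hu y).le)
      (fun h => hout a (mem_of_mem_erase h) : f a ∉ ((univ.image f)ᶜ).erase b)
    rw [hrow, ← add_sum_erase _ _ hb']
    linarith

end FiniteType

section NType

variable {A : Matrix (Fin n) (Fin n) ℤ} {B : Matrix (Fin m) (Fin m) ℤ}

lemma IsNType.isIndecomposable : ∀ {j : ℕ}, IsNType j A → IsIndecomposable A
  | 0, h | 1, h | 2, h | _ + 3, h => by rw [IsNType] at h; exact h.2.1

lemma IsNType.not_isFinType :
    ∀ {j n : ℕ} {A : Matrix (Fin n) (Fin n) ℤ}, 1 ≤ j → IsNType j A → ¬IsFinType A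
  | 0, _, _, hj, _ => absurd hj (by norm_num)
  | 1, _, _, _, h => by rw [IsNType] at h; exact fun hA => hA.not_isAffType h
  | 2, _, _, _, h => by rw [IsNType] at h; exact h.2.2.1
  | j + 3, _, _, _, h => by
    rw [IsNType] at h
    obtain ⟨-, -, ⟨_, D, hDA, hD⟩, -⟩ := h
    exact fun hA => hD.not_isFinType (by omega)
      (hA.of_isPrincipalSubmatrix hDA.1 hD.isIndecomposable)

lemma IsNType.not_isAffType {j : ℕ} (hj : 2 ≤ j) (h : IsNType j A) : ¬IsAffType A := by
  obtain ⟨j, rfl⟩ : ∃ j', j = j' + 2 := ⟨j - 2, by omega⟩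
  rcases j with _ | j
  · rw [IsNType] at h; exact h.2.2.2.1
  · rw [IsNType] at h
    obtain ⟨-, -, ⟨_, D, hDA, hD⟩, -⟩ := h
    exact fun hA => hD.not_isFinType (by omega)
      (hA.isFinType_of_isProperPrincipalSubmatrix hDA hD.isIndecomposable)

theorem IsNType.lt_of_isProperPrincipalSubmatrix {i j : ℕ} (hA : IsNType i A)
    (hBA : IsProperPrincipalSubmatrix B A) (hB : IsNType j B) (hj : 2 ≤ j) : j < i := by
  induction i using Nat.strong_induction_on generalizing n m A B j with
  | _ i ih =>
  match i, hA with
  | 0, hA =>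
    rw [IsNType] at hA
    exact (hB.not_isFinType (by omega) (hA.of_isPrincipalSubmatrix hBA.1 hB.isIndecomposable)).elim
  | 1, hA =>
    rw [IsNType] at hA
    exact (hB.not_isFinType (by omega)
      (hA.isFinType_of_isProperPrincipalSubmatrix hBA hB.isIndecomposable)).elim
  | 2, hA =>
    rw [IsNType] at hA
    rcases hA.2.2.2.2 _ B hBA hB.isIndecomposable with h | h
    exacts [(hB.not_isFinType (by omega) h).elim, (hB.not_isAffType hj h).elim]
  | i + 3, hA =>
    rw [IsNType] at hA
    obtain ⟨i', hi', hBi'⟩ := hA.2.2.2 _ B hBA hB.isIndecomposable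
    by_contra! hij
    -- then `j ≥ 3`, and the `N_{j-1}` submatrix of `B` contradicts `B` being of type `N_{i'}`
    obtain ⟨j, rfl⟩ : ∃ j', j = j' + 3 := ⟨j - 3, by omega⟩
    rw [IsNType] at hB
    obtain ⟨-, -, ⟨_, D, hDB, hD⟩, -⟩ := hB
    have := ih i' hi' hBi' hDB hD (by omega)
    omega

end NType

theorem exists_principal_submatrix_of_isNType_general {k n : ℕ} (hk : 2 < k)
    {A : Matrix (Fin n) (Fin n) ℤ} (hN : IsNType k A) :
    ∃ B : Matrix (Fin (n - 1)) (Fin (n - 1)) ℤ,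
      IsProperPrincipalSubmatrix B A ∧ IsNType (k - 1) B := by
  obtain ⟨k, rfl⟩ : ∃ k', k = k' + 3 := ⟨k - 3, by omega⟩
  rw [IsNType] at hN
  obtain ⟨-, hAc, ⟨m, B, hBA, hB⟩, hsub⟩ := hN
  obtain rfl : m = n - 1 := by
    obtain ⟨⟨f, hf, rfl⟩, hm, hmn⟩ := hBA
    by_contra hne
    obtain ⟨g, hg, hBC, hC⟩ := hAc.exists_extension hf hmn hB.isIndecomposable
    obtain ⟨j, hj, hCj⟩ := hsub _ _ ⟨⟨g, hg, rfl⟩, by omega, by omega⟩ hC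
    have := hCj.lt_of_isProperPrincipalSubmatrix ⟨hBC, hm, by omega⟩ hB (by omega)
    omega
  exact ⟨B, hBA, hB⟩

/-- Theorem 3.1 of the paper: a GCM of type `N_{k,n}` with `k > 2`
has a principal submatrix of type `N_{k-1}` of dimension `n - 1`. -/
theorem exists_principal_submatrix_of_isNType {k n : ℕ} (hk : 2 < k) (hn : 0 < n)
    {A : Matrix (Fin n) (Fin n) ℤ} (hA : IsGCM A) (hN : IsNType k A) :
    ∃ B : Matrix (Fin (n - 1)) (Fin (n - 1)) ℤ,
      IsProperPrincipalSubmatrix B A ∧ IsNType (k - 1) B :=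
  exists_principal_submatrix_of_isNType_general hk hN
end

section
/- Let A = (a_ij) be an ℓ×ℓ generalized Cartan matrix. Then A is symmetrizable if and only if for every k ≤ ℓ and every sequence of indices i_1,…,i_k ∈ {1,…,ℓ} with i_s ≠ i_{s+1} for all s taken modulo k, one has a_{i_1 i_2} a_{i_2 i_3} ⋯ a_{i_k i_1} = a_{i_2 i_1} a_{i_3 i_2} ⋯ a_{i_1 i_k}. -/
/-- A matrix is symmetrizable if there are nonzero rationals `d₁, …, dₙ` such that
`diag(d₁, …, dₙ) * A` is symmetric. -/
def IsSymmetrizable {n : ℕ} (A : Matrix (Fin n) (Fin n) ℤ) : Prop :=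
  ∃ d : Fin n → ℚ, (∀ i, d i ≠ 0) ∧
    (Matrix.diagonal d * A.map (Int.cast : ℤ → ℚ)).IsSymm

/-! If `dᵢ aᵢⱼ = dⱼ aⱼᵢ`, multiplying these relations around a cycle cancels the `d`'s.
Conversely, the cycle condition for cycles of length at most `ℓ` extends to all closed walks in
the graph of `A`: a longer closed walk revisits a vertex, hence splits into two shorter closed
walks. Consequently, for a walk `p` from a fixed root of the component of `i` to `i`, the ratio
`dᵢ = ∏_{(s,t) ∈ p} aₛₜ / ∏_{(s,t) ∈ p} aₜₛ` does not depend on `p`, and comparing the walks to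
`j` and to `i` followed by the edge `i — j` gives `dᵢ aᵢⱼ = dⱼ aⱼᵢ`. -/

open Matrix

namespace SimpleGraph.Walk

variable {V R : Type*} {G : SimpleGraph V}

section CommMonoid

variable [CommMonoid R] (A : Matrix V V R)

def entryProd {u v : V} (p : G.Walk u v) : R :=
  (p.darts.map fun d => A d.fst d.snd).prod

variable {A}

@[simp]
lemma entryProd_nil {v : V} : (nil : G.Walk v v).entryProd A = 1 := rfl

@[simp]
lemma entryProd_cons {u v w : V} (h : G.Adj u v) (p : G.Walk v w) :
    (cons h p).entryProd A = A u v * p.entryProd A := by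
  simp [entryProd]

@[simp]
lemma entryProd_append {u v w : V} (p : G.Walk u v) (q : G.Walk v w) :
    (p.append q).entryProd A = p.entryProd A * q.entryProd A := by
  simp [entryProd, darts_append]

@[simp]
lemma entryProd_copy {u v u' v' : V} (p : G.Walk u v) (hu : u = u') (hv : v = v') :
    (p.copy hu hv).entryProd A = p.entryProd A := by
  subst hu hv; rfl

@[simp]
lemma entryProd_reverse {u v : V} (p : G.Walk u v) :
    p.reverse.entryProd A = p.entryProd Aᵀ := by
  simp [entryProd, darts_reverse, List.map_reverse, List.prod_reverse, Function.comp_def]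

lemma entryProd_eq_of_darts_perm {u v u' v' : V} {p : G.Walk u v} {q : G.Walk u' v'}
    (h : p.darts.Perm q.darts) : p.entryProd A = q.entryProd A :=
  (h.map _).prod_eq

lemma entryProd_eq_prod_getVert {u v : V} (p : G.Walk u v) :
    p.entryProd A = ∏ i : Fin p.length, A (p.getVert i) (p.getVert (i + 1)) := by
  rw [entryProd, ← Fin.prod_univ_fun_getElem]
  exact Fintype.prod_equiv (finCongr p.length_darts) _ _ fun i => by
    simp [darts_getElem_eq_getVert]

lemma getVert_fin_add_one {v : V} (c : G.Walk v v) {k : ℕ} (hk : c.length = k + 1)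
    (s : Fin (k + 1)) : c.getVert ↑(s + 1) = c.getVert (↑s + 1) := by
  rw [Fin.val_add_one]
  split_ifs with hs
  · simp [hs, ← hk]
  · rfl

lemma adj_getVert_fin_add_one {v : V} (c : G.Walk v v) {k : ℕ} (hk : c.length = k + 1)
    (s : Fin (k + 1)) : G.Adj (c.getVert s) (c.getVert ↑(s + 1)) := by
  rw [c.getVert_fin_add_one hk]
  exact c.adj_getVert_succ (by omega)

lemma entryProd_eq_prod_fin_add_one {v : V} (c : G.Walk v v) {k : ℕ} (hk : c.length = k + 1) :
    c.entryProd A = ∏ s : Fin (k + 1), A (c.getVert s) (c.getVert ↑(s + 1)) := by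
  rw [entryProd_eq_prod_getVert]
  exact Fintype.prod_equiv (finCongr hk) _ _ fun i => by
    simp [c.getVert_fin_add_one hk]

lemma entryProd_mul_entryProd_transpose_comm
    (hA : ∀ v (c : G.Walk v v), c.entryProd A = c.entryProd Aᵀ) {u v : V} (p q : G.Walk u v) :
    p.entryProd A * q.entryProd Aᵀ = p.entryProd Aᵀ * q.entryProd A := by
  simpa using hA u (p.append q.reverse)

end CommMonoid

lemma exists_eq_append_of_two_le_count [DecidableEq V] {u : V} (c : G.Walk u u)
    (h : 2 ≤ c.support.tail.count u) :
    ∃ c₁ c₂ : G.Walk u u, 0 < c₁.length ∧ 0 < c₂.length ∧ c = c₁.append c₂ := by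
  cases c with
  | nil => simp at h
  | cons hadj p =>
    have hu : u ∈ p.support := List.count_pos_iff.mp (by simp at h; omega)
    refine ⟨cons hadj (p.takeUntil u hu), p.dropUntil u hu, by simp, ?_, by
      rw [cons_append, p.take_spec hu]⟩
    have hcount := h
    rw [support_cons, List.tail_cons, ← p.take_spec hu, support_append, List.count_append,
      p.count_support_takeUntil_eq_one hu] at hcount
    have := List.count_le_length (a := u) (l := (p.dropUntil u hu).support.tail)
    rw [List.length_tail, length_support] at this
    omega

lemma exists_darts_perm_append_of_not_nodup [DecidableEq V] {v : V} (c : G.Walk v v)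
    (h : ¬ c.support.tail.Nodup) :
    ∃ (u : V) (c₁ c₂ : G.Walk u u), 0 < c₁.length ∧ 0 < c₂.length ∧
      c.darts.Perm (c₁.append c₂).darts := by
  obtain ⟨u, hu⟩ := List.exists_duplicate_iff_not_nodup.mpr h
  have hmem : u ∈ c.support := List.mem_of_mem_tail hu.mem
  have hcount : 2 ≤ (c.rotate u hmem).support.tail.count u := by
    rw [(c.support_rotate u hmem).perm.count_eq]
    exact List.duplicate_iff_two_le_count.mp hu
  obtain ⟨c₁, c₂, h₁, h₂, hc⟩ := (c.rotate u hmem).exists_eq_append_of_two_le_count hcount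
  exact ⟨u, c₁, c₂, h₁, h₂, hc ▸ (c.rotate_darts u hmem).perm.symm⟩

theorem entryProd_eq_of_forall_length_le_card [CommMonoid R] [Fintype V] [DecidableEq V]
    {A B : Matrix V V R}
    (h : ∀ v (c : G.Walk v v), c.length ≤ Fintype.card V → c.entryProd A = c.entryProd B)
    {v : V} (c : G.Walk v v) : c.entryProd A = c.entryProd B := by
  induction hn : c.length using Nat.strong_induction_on generalizing v with
  | _ n ih =>
  by_cases hle : n ≤ Fintype.card V
  · exact h v c (hn ▸ hle)
  have hdup : ¬ c.support.tail.Nodup := fun hnd => by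
    have := hnd.length_le_card
    rw [List.length_tail, length_support] at this
    omega
  obtain ⟨u, c₁, c₂, h₁, h₂, hperm⟩ := c.exists_darts_perm_append_of_not_nodup hdup
  have hlen : c.length = c₁.length + c₂.length := by
    simpa using hperm.length_eq
  rw [entryProd_eq_of_darts_perm hperm, entryProd_eq_of_darts_perm hperm, entryProd_append,
    entryProd_append, ih _ (by omega) c₁ rfl, ih _ (by omega) c₂ rfl]

lemma entryProd_ne_zero [CommMonoidWithZero R] [NoZeroDivisors R] [Nontrivial R]
    {A : Matrix V V R} (hA : ∀ i j, G.Adj i j → A i j ≠ 0) {u v : V} (p : G.Walk u v) :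
    p.entryProd A ≠ 0 :=
  List.prod_ne_zero <| by simpa using fun d _ => hA _ _ d.adj

end SimpleGraph.Walk

namespace SimpleGraph

open Walk

variable {V K : Type*} {G : SimpleGraph V}

theorem exists_symmetrizer_of_entryProd_eq_transpose [Field K] {A : Matrix V V K}
    (hadj : ∀ i j, G.Adj i j → A i j ≠ 0) (hnadj : ∀ i j, i ≠ j → ¬ G.Adj i j → A i j = 0)
    (hcycle : ∀ v (c : G.Walk v v), c.entryProd A = c.entryProd Aᵀ) :
    ∃ d : V → K, (∀ i, d i ≠ 0) ∧ ∀ i j, d i * A i j = d j * A j i := by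
  have hadjT : ∀ i j, G.Adj i j → Aᵀ i j ≠ 0 := fun i j h => hadj j i h.symm
  let root (i : V) : V := (G.connectedComponentMk i).out
  let w (i : V) : G.Walk (root i) i :=
    (ConnectedComponent.exact (G.connectedComponentMk i).out_eq).some
  refine ⟨fun i => (w i).entryProd A / (w i).entryProd Aᵀ,
    fun i => div_ne_zero (entryProd_ne_zero hadj _) (entryProd_ne_zero hadjT _), fun i j => ?_⟩
  rcases eq_or_ne i j with rfl | hij
  · rfl
  by_cases hadj_ij : G.Adj i j
  · have hroot : root i = root j := congrArg Quot.out (ConnectedComponent.sound hadj_ij.reachable)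
    have key := entryProd_mul_entryProd_transpose_comm hcycle
      (((w i).append (cons hadj_ij nil)).copy hroot rfl) (w j)
    simp only [entryProd_copy, entryProd_append, entryProd_cons, entryProd_nil,
      transpose_apply, mul_one] at key
    have := entryProd_ne_zero hadjT (w i)
    have := entryProd_ne_zero hadjT (w j)
    field_simp
    linear_combination key
  · simp [hnadj i j hij hadj_ij, hnadj j i hij.symm fun h => hadj_ij h.symm]

end SimpleGraph

theorem Matrix.prod_cycle_eq_of_mul_eq {V K : Type*} [Field K] {A : Matrix V V K} {d : V → K}
    (hd : ∀ i, d i ≠ 0) (hsymm : ∀ i j, d i * A i j = d j * A j i) {k : ℕ}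
    (f : Fin (k + 1) → V) : ∏ s, A (f s) (f (s + 1)) = ∏ s, A (f (s + 1)) (f s) := by
  have hshift : ∏ s, d (f (s + 1)) = ∏ s, d (f s) :=
    Equiv.prod_comp (Equiv.addRight (1 : Fin (k + 1))) fun s => d (f s)
  refine mul_left_cancel₀ (Finset.prod_ne_zero_iff.mpr fun s _ => hd (f s) :
    ∏ s, d (f s) ≠ 0) ?_
  calc (∏ s, d (f s)) * ∏ s, A (f s) (f (s + 1))
      = ∏ s, d (f (s + 1)) * A (f (s + 1)) (f s) := by
        rw [← Finset.prod_mul_distrib]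
        exact Finset.prod_congr rfl fun s _ => hsymm _ _
    _ = (∏ s, d (f s)) * ∏ s, A (f (s + 1)) (f s) := by
        rw [Finset.prod_mul_distrib, hshift]

lemma isSymmetrizable_iff {n : ℕ} (A : Matrix (Fin n) (Fin n) ℤ) :
    IsSymmetrizable A ↔ ∃ d : Fin n → ℚ, (∀ i, d i ≠ 0) ∧ ∀ i j, d i * A i j = d j * A j i := by
  simp only [IsSymmetrizable, Matrix.IsSymm.ext_iff, Matrix.diagonal_mul, Matrix.map_apply]
  exact exists_congr fun d => and_congr_right fun _ => forall_comm

lemma IsGCM.ne_zero_of_adj {n : ℕ} {A : Matrix (Fin n) (Fin n) ℤ} (hA : IsGCM A) {i j : Fin n}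
    (h : (gcmGraph A).Adj i j) : A i j ≠ 0 :=
  h.2.elim id fun hji hij => hji (hA.2.2 i j hij)

lemma eq_zero_of_not_gcmGraph_adj {n : ℕ} {A : Matrix (Fin n) (Fin n) ℤ} {i j : Fin n}
    (hij : i ≠ j) (h : ¬ (gcmGraph A).Adj i j) : A i j = 0 := by
  by_contra h0
  exact h ⟨hij, Or.inl h0⟩

open SimpleGraph Walk in
lemma entryProd_eq_transpose_of_cycle_condition {ℓ : ℕ} {A : Matrix (Fin ℓ) (Fin ℓ) ℤ}
    (hcycle : ∀ k : ℕ, k + 1 ≤ ℓ → ∀ f : Fin (k + 1) → Fin ℓ,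
        (∀ s, f s ≠ f (s + 1)) → ∏ s, A (f s) (f (s + 1)) = ∏ s, A (f (s + 1)) (f s))
    {v : Fin ℓ} (c : (gcmGraph A).Walk v v) (hc : c.length ≤ ℓ) :
    c.entryProd (A.map (Int.cast : ℤ → ℚ)) = c.entryProd (A.map (Int.cast : ℤ → ℚ))ᵀ := by
  rcases hk : c.length with _ | k
  · obtain rfl := (length_eq_zero_iff.mp hk).eq_nil
    rfl
  rw [entryProd_eq_prod_fin_add_one c hk, entryProd_eq_prod_fin_add_one c hk]
  simp only [map_apply, transpose_apply]
  exact_mod_cast hcycle k (hk ▸ hc) (fun s => c.getVert s)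
    fun s => (c.adj_getVert_fin_add_one hk s).ne

/-- Proposition 2.2 of the paper: an `ℓ × ℓ` GCM `A` is
symmetrizable if and only if for every cyclic sequence of indices
`i₁, …, i_k` (`k ≤ ℓ`, consecutive indices distinct modulo `k`) one has
`a_{i₁ i₂} a_{i₂ i₃} ⋯ a_{i_k i₁} = a_{i₂ i₁} a_{i₃ i₂} ⋯ a_{i₁ i_k}`.
The cyclic sequence of length `k + 1 ≤ ℓ` is encoded as `f : Fin (k+1) → Fin ℓ`,
with cyclic successor `s + 1` in `Fin (k+1)`. -/
theorem isSymmetrizable_iff_cycle_condition {ℓ : ℕ}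
    {A : Matrix (Fin ℓ) (Fin ℓ) ℤ} (hA : IsGCM A) :
    IsSymmetrizable A ↔
      ∀ k : ℕ, k + 1 ≤ ℓ → ∀ f : Fin (k + 1) → Fin ℓ,
        (∀ s, f s ≠ f (s + 1)) →
        ∏ s, A (f s) (f (s + 1)) = ∏ s, A (f (s + 1)) (f s) := by
  rw [isSymmetrizable_iff]
  constructor
  · rintro ⟨d, hd, hsymm⟩ k - f -
    exact_mod_cast Matrix.prod_cycle_eq_of_mul_eq hd hsymm f
  · intro hcycle
    have hclosed : ∀ v (c : (gcmGraph A).Walk v v),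
        c.entryProd (A.map (Int.cast : ℤ → ℚ)) = c.entryProd (A.map (Int.cast : ℤ → ℚ))ᵀ :=
      fun _ => SimpleGraph.Walk.entryProd_eq_of_forall_length_le_card fun _ c hc =>
        entryProd_eq_transpose_of_cycle_condition hcycle c (by simpa using hc)
    exact SimpleGraph.exists_symmetrizer_of_entryProd_eq_transpose
      (fun i j h => by simpa using hA.ne_zero_of_adj h)
      (fun i j hij h => by simpa using eq_zero_of_not_gcmGraph_adj hij h) hclosed
end

section
/- Let k ≥ 2. The minimum dimension of an N_k type generalized Cartan matrix is k: every generalized Cartan matrix of type N_{k,n} satisfies n ≥ k, and there exists a generalized Cartan matrix of type N_{k,k}. -/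
/-!
The lower bound is an induction on `k`: a hyperbolic matrix has at least two rows, since a `1 × 1`
GCM is of finite type, and an `N_{k+1}` matrix properly contains an `N_k` one.

For sharpness take the Cartan matrix of a path `0 — 1 — ⋯ — (k-1)` whose first edge carries
the hyperbolic block `[[2, -3], [-2, 2]]` and whose other edges are simply laced. Its connected
principal submatrices are the intervals of the path: those containing the vertex `0` are the
smaller matrices of the same family, the others are of finite type `A_m`.
-/

open SimpleGraph

theorem SimpleGraph.Preconnected.ordConnected_range {V : Type*} {G : SimpleGraph V}
    (hG : G.Preconnected) (φ : V → ℕ) (hφ : ∀ u v, G.Adj u v → φ v ≤ φ u + 1) :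
    (Set.range φ).OrdConnected := by
  refine ⟨?_⟩
  rintro _ ⟨a, rfl⟩ _ ⟨b, rfl⟩ x ⟨hax, hxb⟩
  obtain ⟨w⟩ := hG a b
  induction w with
  | nil => exact ⟨_, le_antisymm hax hxb⟩
  | @cons a a' b hadj _ ih =>
    by_cases ha' : φ a' ≤ x
    · exact ih ha' hxb
    · exact ⟨a, le_antisymm hax (by linarith [hφ a a' hadj])⟩

theorem StrictMono.apply_eq_add_of_ordConnected_range {m : ℕ} {g : Fin m → ℕ} (hg : StrictMono g)
    (hrange : (Set.range g).OrdConnected) (hm : 0 < m) (j : ℕ) (hj : j < m) :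
    g ⟨j, hj⟩ = g ⟨0, hm⟩ + j := by
  induction j with
  | zero => rfl
  | succ j ih =>
    have hlt : g ⟨j, by omega⟩ < g ⟨j + 1, hj⟩ := hg (Fin.mk_lt_mk.mpr j.lt_succ_self)
    obtain ⟨v, hv⟩ := hrange.out ⟨_, rfl⟩ ⟨_, rfl⟩ ⟨Nat.le_succ _, hlt⟩
    have hjv : (⟨j, by omega⟩ : Fin m) < v := hg.lt_iff_lt.mp (by omega)
    have hvj : v ≤ ⟨j + 1, hj⟩ := hg.le_iff_le.mp (by omega)
    obtain rfl : v = ⟨j + 1, hj⟩ := le_antisymm hvj (Fin.mk_le_of_le_val (Fin.lt_def.mp hjv))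
    rw [hv, ih (by omega)]
    rfl

def pathCartanEntry (a b : ℕ) : ℤ :=
  if a = b then 2
  else if a + 1 = b then (if a = 0 then -3 else -1)
  else if b + 1 = a then (if b = 0 then -2 else -1)
  else 0

def pathCartan (c m : ℕ) : Matrix (Fin m) (Fin m) ℤ :=
  fun i j => pathCartanEntry (c + i) (c + j)

theorem pathCartanEntry_self (a : ℕ) : pathCartanEntry a a = 2 := by
  simp [pathCartanEntry]

theorem pathCartanEntry_nonpos {a b : ℕ} (hab : a ≠ b) : pathCartanEntry a b ≤ 0 := by
  unfold pathCartanEntry; split_ifs <;> omega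

theorem pathCartanEntry_ne_zero_iff {a b : ℕ} (hab : a ≠ b) :
    pathCartanEntry a b ≠ 0 ↔ a + 1 = b ∨ b + 1 = a := by
  unfold pathCartanEntry; split_ifs <;> omega

theorem pathCartanEntry_of_pos {a b : ℕ} (ha : 0 < a) (hb : 0 < b) :
    pathCartanEntry a b = if a = b then 2 else if a + 1 = b ∨ b + 1 = a then -1 else 0 := by
  unfold pathCartanEntry; split_ifs <;> omega

theorem pathCartanEntry_eq_zero_comm (a b : ℕ) :
    pathCartanEntry a b = 0 ↔ pathCartanEntry b a = 0 := by
  obtain rfl | hab := eq_or_ne a b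
  · rfl
  · rw [← not_iff_not]
    exact (pathCartanEntry_ne_zero_iff hab).trans
      (or_comm.trans (pathCartanEntry_ne_zero_iff hab.symm).symm)

theorem isGCM_pathCartan (c m : ℕ) : IsGCM (pathCartan c m) :=
  ⟨fun _ => pathCartanEntry_self _,
    fun _ _ hij => pathCartanEntry_nonpos (by simpa [Fin.ext_iff] using hij),
    fun _ _ h => (pathCartanEntry_eq_zero_comm _ _).mp h⟩

theorem gcmGraph_pathCartan (c m : ℕ) : gcmGraph (pathCartan c m) = pathGraph m := by
  ext i j
  simp only [gcmGraph, pathCartan, pathGraph_adj]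
  obtain rfl | hij := eq_or_ne i j
  · simp
  · have hne : c + (i : ℕ) ≠ c + j := by simpa [Fin.ext_iff] using hij
    rw [pathCartanEntry_ne_zero_iff hne, pathCartanEntry_ne_zero_iff hne.symm]
    omega

theorem isIndecomposable_pathCartan (c : ℕ) {m : ℕ} (hm : 0 < m) :
    IsIndecomposable (pathCartan c m) := by
  obtain ⟨m, rfl⟩ : ∃ m', m = m' + 1 := ⟨m - 1, by omega⟩
  rw [IsIndecomposable, gcmGraph_pathCartan]
  exact pathGraph_connected m

theorem pathCartan_submatrix_eq_of_isIndecomposable {c n m : ℕ} {f : Fin m → Fin n}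
    (hf : StrictMono f) (hm : 0 < m) (hB : IsIndecomposable ((pathCartan c n).submatrix f f)) :
    (pathCartan c n).submatrix f f = pathCartan (c + f ⟨0, hm⟩) m := by
  have hstep (u v : Fin m) (huv : (gcmGraph ((pathCartan c n).submatrix f f)).Adj u v) :
      (f v : ℕ) ≤ f u + 1 := by
    have hadj : (pathGraph n).Adj (f u) (f v) := by
      rw [← gcmGraph_pathCartan c n]
      exact ⟨hf.injective.ne huv.1, huv.2⟩
    rw [pathGraph_adj] at hadj
    omega
  have hval (i : Fin m) : (f i : ℕ) = f ⟨0, hm⟩ + i :=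
    (Fin.val_strictMono.comp hf).apply_eq_add_of_ordConnected_range
      (hB.preconnected.ordConnected_range _ hstep) hm i i.2
  ext i j
  simp only [Matrix.submatrix_apply, pathCartan]
  rw [hval i, hval j, add_assoc, add_assoc]

theorem isFinType_of_fin_one (B : Matrix (Fin 1) (Fin 1) ℤ) (h : B 0 0 = 2) : IsFinType B := by
  have hB : B = fun _ _ => 2 := by
    ext i j
    rw [Subsingleton.elim i 0, Subsingleton.elim j 0, h]
  subst hB
  refine ⟨⟨fun _ => rfl, fun i j hij => absurd (Subsingleton.elim i j) hij, by simp⟩,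
    ⟨fun u v => by rw [Subsingleton.elim u v]⟩, fun _ => 1, fun _ => one_pos, fun _ => ?_⟩
  norm_num

theorem Fin.sum_ite_val_eq {m : ℕ} (g : ℤ → ℚ) (a : ℤ) (hg : a < 0 ∨ m ≤ a → g a = 0) :
    ∑ j : Fin m, (if (j : ℤ) = a then g j else 0) = g a := by
  by_cases ha : 0 ≤ a ∧ a < m
  · rw [Finset.sum_eq_single_of_mem ⟨a.toNat, by omega⟩ (Finset.mem_univ _)]
    · simp [Int.toNat_of_nonneg ha.1]
    · intro j _ hj
      rw [if_neg]
      contrapose! hj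
      ext
      simp [← hj]
  · rw [hg (by omega)]
    exact Finset.sum_eq_zero fun j _ => if_neg (by omega)

/-- The witness `u j = (j + 1)(m - j)` vanishes at `j = -1` and `j = m`, so the truncated rows
of the path matrix act on it like the full second difference `2 u j - u (j - 1) - u (j + 1) = 2`. -/
theorem isFinType_pathCartan {c m : ℕ} (hc : 0 < c) (hm : 0 < m) : IsFinType (pathCartan c m) := by
  set q : ℤ → ℚ := fun x => (x + 1) * (m - x) with hq
  refine ⟨isGCM_pathCartan c m, isIndecomposable_pathCartan c hm, fun j => q j, fun j => ?_,
    fun i => ?_⟩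
  · have hj : ((j : ℕ) : ℚ) < m := by exact_mod_cast j.2
    simp only [hq, Int.cast_natCast]
    positivity
  have hrow (j : Fin m) : (pathCartan c m i j : ℚ) * q j =
      (if (j : ℤ) = i then 2 * q j else 0) - (if (j : ℤ) = i + 1 then q j else 0)
        - (if (j : ℤ) = i - 1 then q j else 0) := by
    rw [pathCartan, pathCartanEntry_of_pos (by omega) (by omega)]
    split_ifs <;> push_cast <;> first | (exfalso; omega) | ring
  have hi : (i : ℤ) < m := by exact_mod_cast i.2
  have hdiff : 2 * q i - q (i + 1) - q (i - 1) = 2 := by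
    simp only [hq]
    push_cast
    ring
  rw [Finset.sum_congr rfl fun j _ => hrow j, Finset.sum_sub_distrib, Finset.sum_sub_distrib,
    Fin.sum_ite_val_eq (fun x => 2 * q x) _ (by omega), Fin.sum_ite_val_eq q,
    Fin.sum_ite_val_eq q]
  · rw [hdiff]
    exact two_pos
  · intro h
    simp [hq, show ((i : ℕ) : ℤ) = 0 by omega]
  · intro h
    simp [hq, show ((i : ℕ) : ℤ) + 1 = m by omega]

theorem not_nonneg_mulVec_pathCartan_two (u : Fin 2 → ℚ) (hu : ∀ i, 0 < u i) :
    ¬ ∀ i, 0 ≤ ∑ j, (pathCartan 0 2 i j : ℚ) * u j := by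
  intro h
  have h0 := h 0
  have h1 := h 1
  simp only [Fin.sum_univ_two] at h0 h1
  norm_num [pathCartan, pathCartanEntry] at h0 h1
  linarith [hu 0]

theorem isHypType_pathCartan_two : IsHypType (pathCartan 0 2) := by
  refine ⟨isGCM_pathCartan 0 2, isIndecomposable_pathCartan 0 two_pos, ?_, ?_, ?_⟩
  · rintro ⟨-, -, u, hu, hAu⟩
    exact not_nonneg_mulVec_pathCartan_two u hu fun i => (hAu i).le
  · rintro ⟨-, -, u, hu, hAu⟩
    exact not_nonneg_mulVec_pathCartan_two u hu fun i => (hAu i).ge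
  · rintro m B ⟨⟨f, -, rfl⟩, hm, hm2⟩ -
    obtain rfl : m = 1 := by omega
    exact Or.inl (isFinType_of_fin_one _ (pathCartanEntry_self _))

theorem IsHypType.two_le {n : ℕ} {A : Matrix (Fin n) (Fin n) ℤ} (hA : IsHypType A) : 2 ≤ n := by
  obtain ⟨hGCM, hconn, hfin, -⟩ := hA
  by_contra! hn
  interval_cases n
  · exact hconn.nonempty.elim Fin.elim0
  · exact hfin (isFinType_of_fin_one A (hGCM.1 0))

theorem add_two_le_of_isNType {k n : ℕ} {A : Matrix (Fin n) (Fin n) ℤ}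
    (hA : IsNType (k + 2) A) : k + 2 ≤ n := by
  induction k generalizing n with
  | zero => exact IsHypType.two_le (by rwa [IsNType] at hA)
  | succ k ih =>
    rw [IsNType] at hA
    obtain ⟨-, -, ⟨m, B, ⟨-, -, hmn⟩, hB⟩, -⟩ := hA
    have := ih hB
    omega

theorem IsFinType.isNType_zero {n : ℕ} {A : Matrix (Fin n) (Fin n) ℤ} (hA : IsFinType A) :
    IsNType 0 A := by
  rwa [IsNType]

theorem isNType_pathCartan {k : ℕ} (hk : 2 ≤ k) : IsNType k (pathCartan 0 k) := by
  induction k using Nat.strong_induction_on with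
  | _ k ih =>
  match k, hk with
  | 2, _ => rw [IsNType]; exact isHypType_pathCartan_two
  | k + 3, _ =>
    rw [IsNType]
    refine ⟨isGCM_pathCartan _ _, isIndecomposable_pathCartan _ (by omega),
      ⟨k + 2, pathCartan 0 (k + 2), ⟨⟨Fin.castSucc, Fin.strictMono_castSucc, rfl⟩, by omega,
        by omega⟩, ih (k + 2) (by omega) (by omega)⟩, ?_⟩
    rintro m B ⟨⟨f, hf, rfl⟩, hm, hmk⟩ hB
    rw [pathCartan_submatrix_eq_of_isIndecomposable hf hm hB, zero_add]
    obtain hf0 | hf0 := Nat.eq_zero_or_pos (f ⟨0, hm⟩)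
    · rw [hf0]
      obtain rfl | hm2 := eq_or_lt_of_le (Nat.succ_le_of_lt hm)
      · exact ⟨0, by omega, (isFinType_of_fin_one _ (pathCartanEntry_self _)).isNType_zero⟩
      · exact ⟨m, hmk, ih m hmk hm2⟩
    · exact ⟨0, by omega, (isFinType_pathCartan hf0 hm).isNType_zero⟩

/-- Proposition 4.2 of the paper: for `k ≥ 2`, the minimum
dimension of an `N_k` type GCM is `k`: every GCM of type `N_{k,n}` has `n ≥ k`,
and there exists a GCM of type `N_{k,k}`. -/
theorem min_dim_of_isNType {k : ℕ} (hk : 2 ≤ k) :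
    (∀ n, ∀ A : Matrix (Fin n) (Fin n) ℤ, IsGCM A → IsNType k A → k ≤ n) ∧
    (∃ A : Matrix (Fin k) (Fin k) ℤ, IsGCM A ∧ IsNType k A) := by
  obtain ⟨k, rfl⟩ := Nat.exists_eq_add_of_le' hk
  exact ⟨fun _ _ _ hA => add_two_le_of_isNType hA,
    ⟨pathCartan 0 (k + 2), isGCM_pathCartan _ _, isNType_pathCartan hk⟩⟩
end
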